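/- Let ρ > 1, δ₃ > 0, 0 < h < e^{−1/ρ}, and define J₂'(n,z) = Γ(1+n/ρ)/(R_n^{n+1} z^{n+1}). Then there exists N such that for all n ≥ N and all z ∈ Ω₄ = {z = re^{iφ} : 0 < r ≤ e^{−1/ρ} − h, |φ| ≥ π/(2ρ) + δ₃}, one has |J₂'(n,z)| ≥ (1 + h e^{1/ρ}/2)^n. -/

import Mathlib

open Complex Real Filter Topology

/-- `R_n = Γ(1+n/ρ)/Γ(1+(n-1)/ρ)`. -/
noncomputable def Rn (ρ : ℝ) (n : ℕ) : ℝ :=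
  Real.Gamma (1 + (n : ℝ) / ρ) / Real.Gamma (1 + ((n : ℝ) - 1) / ρ)


/-- `J₂·(n,z) = Γ(1+n/ρ)/(R_n^{n+1} z^{n+1})`. -/
noncomputable def J2 (ρ : ℝ) (n : ℕ) (z : ℂ) : ℂ :=
  (Real.Gamma (1 + (n : ℝ) / ρ) : ℂ) / ((Rn ρ n : ℂ) ^ (n + 1) * z ^ (n + 1))

/-!
Log-convexity of `Γ` in the form `Γ(x + t) ≤ x ^ t Γ(x)` (`0 < t < 1`) sandwiches
`(n/ρ)^(1/ρ) ≤ R_n ≤ (1 + (n-1)/ρ)^(1/ρ)`. Telescoping the lower bound gives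
`Γ(1 + n/ρ) ≥ (n!/ρ^n)^(1/ρ)`; with `n! ≥ (n/e)^n` and `(1 + (ρ-1)/n)^n ≤ e^(ρ-1)` this
yields `Γ(1 + n/ρ) / R_n^(n+1) ≥ C e^(-n/ρ) / n` with `C = e^((1-ρ)/ρ)`. Hence
`|J₂'(n,z)| ≥ C (e^(-1/ρ)/r)^n / (n r)`, and since
`(e^(-1/ρ) - h)(1 + h e^(1/ρ)/2) < e^(-1/ρ)`, the exponential gain beats the factor `n`.
-/

open scoped Nat

theorem Real.Gamma_add_le_rpow_mul_Gamma {x t : ℝ} (hx : 0 < x) (ht₀ : 0 < t) (ht₁ : t < 1) :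
    Real.Gamma (x + t) ≤ x ^ t * Real.Gamma x := by
  have hconv := Gamma_mul_add_mul_le_rpow_Gamma_mul_rpow_Gamma hx (by linarith : 0 < x + 1)
    (sub_pos.2 ht₁) ht₀ (by ring)
  have hΓ := Gamma_pos_of_pos hx
  rwa [show (1 - t) * x + t * (x + 1) = x + t by ring, Gamma_add_one hx.ne',
    mul_rpow hx.le hΓ.le, mul_left_comm, ← rpow_add hΓ, sub_add_cancel, rpow_one] at hconv

theorem one_add_sub_one_div_pos {ρ : ℝ} (hρ : 1 < ρ) (n : ℕ) :
    0 < 1 + ((n : ℝ) - 1) / ρ := by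
  have : -1 < ((n : ℝ) - 1) / ρ := by
    rw [lt_div_iff₀ (by linarith)]; linarith [(n.cast_nonneg : (0 : ℝ) ≤ n)]
  linarith

theorem Rn_pos {ρ : ℝ} (hρ : 1 < ρ) (n : ℕ) : 0 < Rn ρ n := by
  have hρ₀ : 0 < ρ := by linarith
  exact div_pos (Gamma_pos_of_pos (by positivity))
    (Gamma_pos_of_pos (one_add_sub_one_div_pos hρ n))

theorem rpow_le_Rn {ρ : ℝ} (hρ : 1 < ρ) {n : ℕ} (hn : 0 < n) :
    ((n : ℝ) / ρ) ^ (1 / ρ) ≤ Rn ρ n := by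
  have hρ₀ : 0 < ρ := by linarith
  have hy : 0 < (n : ℝ) / ρ := by positivity
  have hwendel := Gamma_add_le_rpow_mul_Gamma hy (t := 1 - 1 / ρ)
    (by rw [sub_pos, div_lt_one hρ₀]; exact hρ) (by simp only [sub_lt_self_iff]; positivity)
  rw [show (n : ℝ) / ρ + (1 - 1 / ρ) = 1 + ((n : ℝ) - 1) / ρ by ring] at hwendel
  rw [Rn, le_div_iff₀ (Gamma_pos_of_pos (one_add_sub_one_div_pos hρ n)),
    add_comm 1 ((n : ℝ) / ρ), Gamma_add_one hy.ne']
  calc ((n : ℝ) / ρ) ^ (1 / ρ) * Real.Gamma (1 + ((n : ℝ) - 1) / ρ)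
      ≤ ((n : ℝ) / ρ) ^ (1 / ρ) *
          (((n : ℝ) / ρ) ^ (1 - 1 / ρ) * Real.Gamma ((n : ℝ) / ρ)) := by
        gcongr
    _ = (n : ℝ) / ρ * Real.Gamma ((n : ℝ) / ρ) := by
        rw [← mul_assoc, ← rpow_add hy, add_sub_cancel, rpow_one]

theorem Rn_le_rpow {ρ : ℝ} (hρ : 1 < ρ) (n : ℕ) :
    Rn ρ n ≤ (1 + ((n : ℝ) - 1) / ρ) ^ (1 / ρ) := by
  have hρ₀ : 0 < ρ := by linarith
  have hx := one_add_sub_one_div_pos hρ n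
  have hwendel := Gamma_add_le_rpow_mul_Gamma hx (t := 1 / ρ) (by positivity)
    (by rw [div_lt_one hρ₀]; exact hρ)
  rw [show 1 + ((n : ℝ) - 1) / ρ + 1 / ρ = 1 + (n : ℝ) / ρ by ring] at hwendel
  exact div_le_of_le_mul₀ (Gamma_pos_of_pos hx).le (by positivity) hwendel

theorem Gamma_one_add_succ_div_eq_Rn_mul {ρ : ℝ} (hρ : 1 < ρ) (n : ℕ) :
    Real.Gamma (1 + ((n + 1 : ℕ) : ℝ) / ρ) =
      Rn ρ (n + 1) * Real.Gamma (1 + (n : ℝ) / ρ) := by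
  have hΓ : Real.Gamma (1 + (n : ℝ) / ρ) ≠ 0 := by
    simpa using (Gamma_pos_of_pos (one_add_sub_one_div_pos hρ (n + 1))).ne'
  rw [Rn, Nat.cast_succ, add_sub_cancel_right, div_mul_cancel₀ _ hΓ]

theorem factorial_div_pow_rpow_le_Gamma {ρ : ℝ} (hρ : 1 < ρ) (n : ℕ) :
    ((n ! : ℝ) / ρ ^ n) ^ (1 / ρ) ≤ Real.Gamma (1 + (n : ℝ) / ρ) := by
  have hρ₀ : 0 < ρ := by linarith
  induction n with
  | zero => simp
  | succ n ih =>
    rw [Gamma_one_add_succ_div_eq_Rn_mul hρ, Nat.factorial_succ, Nat.cast_mul, pow_succ',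
      mul_div_mul_comm, mul_rpow (by positivity) (by positivity)]
    exact mul_le_mul (rpow_le_Rn hρ n.succ_pos) ih (by positivity) (Rn_pos hρ _).le

theorem exp_div_le_factorial_mul_div_pow {ρ : ℝ} (hρ : 1 ≤ ρ) {n : ℕ} (hn : 0 < n) :
    Real.exp (1 - ρ - n) / n ≤ n ! * ρ / (n + ρ - 1) ^ (n + 1) := by
  have hm : (0 : ℝ) < n := by exact_mod_cast hn
  have hm₁ : (1 : ℝ) ≤ n := by exact_mod_cast hn
  have hfact : (n : ℝ) ^ n ≤ n ! * Real.exp n := by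
    have := Real.pow_div_factorial_le_exp _ hm.le n
    rwa [div_le_iff₀ (by positivity), mul_comm] at this
  have hshift : ((n : ℝ) + (ρ - 1)) ^ n ≤ Real.exp (ρ - 1) * (n : ℝ) ^ n := by
    have := Real.one_sub_div_pow_le_exp_neg (n := n) (t := -(ρ - 1)) (by linarith)
    rw [neg_neg] at this
    calc ((n : ℝ) + (ρ - 1)) ^ n = (1 - -(ρ - 1) / n) ^ n * (n : ℝ) ^ n := by
          rw [← mul_pow]; congr 1; field_simp; ring
      _ ≤ Real.exp (ρ - 1) * (n : ℝ) ^ n := by gcongr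
  have hexp : Real.exp (1 - ρ - n) * (Real.exp (ρ - 1) * Real.exp n) = 1 := by
    rw [← Real.exp_add, ← Real.exp_add, ← Real.exp_zero]; congr 1; ring
  have hpos : 0 < (n : ℝ) + ρ - 1 := by linarith
  have hlin : (n : ℝ) + ρ - 1 ≤ ρ * n := by
    nlinarith [mul_nonneg (sub_nonneg.2 hρ) (sub_nonneg.2 hm₁)]
  rw [div_le_div_iff₀ hm (by positivity)]
  calc Real.exp (1 - ρ - n) * ((n : ℝ) + ρ - 1) ^ (n + 1)
      = Real.exp (1 - ρ - n) * (((n : ℝ) + (ρ - 1)) ^ n * (n + ρ - 1)) := by ring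
    _ ≤ Real.exp (1 - ρ - n) * ((Real.exp (ρ - 1) * (n ! * Real.exp n)) * (ρ * n)) := by
        gcongr
        exact hshift.trans (by gcongr)
    _ = n ! * ρ * n := by linear_combination (n ! * ρ * n) * hexp

theorem exp_mul_exp_neg_pow_div_le_Gamma_div_Rn_pow {ρ : ℝ} (hρ : 1 < ρ) {n : ℕ}
    (hn : 0 < n) :
    Real.exp ((1 - ρ) / ρ) * Real.exp (-(1 / ρ)) ^ n / n ≤
      Real.Gamma (1 + (n : ℝ) / ρ) / Rn ρ n ^ (n + 1) := by
  have hρ₀ : 0 < ρ := by linarith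
  have hm : (1 : ℝ) ≤ n := by exact_mod_cast hn
  calc Real.exp ((1 - ρ) / ρ) * Real.exp (-(1 / ρ)) ^ n / n
      = Real.exp ((1 - ρ - n) * (1 / ρ)) / n := by
        rw [← Real.exp_nat_mul, ← Real.exp_add]; ring_nf
    _ ≤ Real.exp ((1 - ρ - n) * (1 / ρ)) / (n : ℝ) ^ (1 / ρ) := by
        gcongr
        exact rpow_le_self_of_one_le hm (by rw [div_le_one hρ₀]; exact hρ.le)
    _ = (Real.exp (1 - ρ - n) / n) ^ (1 / ρ) := by
        rw [div_rpow (Real.exp_pos _).le (by positivity), ← Real.exp_mul]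
    _ ≤ (n ! * ρ / (n + ρ - 1) ^ (n + 1)) ^ (1 / ρ) :=
        rpow_le_rpow (by positivity) (exp_div_le_factorial_mul_div_pow hρ.le hn) (by positivity)
    _ = ((n ! : ℝ) / ρ ^ n) ^ (1 / ρ) / ((1 + ((n : ℝ) - 1) / ρ) ^ (1 / ρ)) ^ (n + 1) := by
        rw [rpow_pow_comm (one_add_sub_one_div_pos hρ n).le,
          ← div_rpow (by positivity) (pow_pos (one_add_sub_one_div_pos hρ n) _).le]
        congr 1
        rw [show 1 + ((n : ℝ) - 1) / ρ = (n + ρ - 1) / ρ by field_simp; ring, div_pow]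
        field_simp
        ring
    _ ≤ Real.Gamma (1 + (n : ℝ) / ρ) / Rn ρ n ^ (n + 1) := by
        have hRn := Rn_pos hρ n
        exact div_le_div₀ (by positivity) (factorial_div_pow_rpow_le_Gamma hρ n) (by positivity)
          (pow_le_pow_left₀ hRn.le (Rn_le_rpow hρ n) _)

theorem eventually_natCast_mul_pow_le {u v C : ℝ} (hu : 0 < u) (huv : u < v) (hC : 0 < C) :
    ∀ᶠ n : ℕ in atTop, (n : ℝ) * u ^ n ≤ C * v ^ n := by
  have hv : 0 < v := hu.trans huv
  filter_upwards [(isLittleO_coe_const_pow_of_one_lt (R := ℝ) ((one_lt_div hu).2 huv)).bound hC]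
    with n hn
  rw [Real.norm_natCast, norm_pow, Real.norm_of_nonneg (by positivity), div_pow] at hn
  calc (n : ℝ) * u ^ n ≤ C * (v ^ n / u ^ n) * u ^ n := by gcongr
    _ = C * v ^ n := by field_simp

theorem eventually_pow_le_mul_pow_div_natCast_div_pow {a c v C : ℝ} (ha : 0 < a) (hc : 0 < c)
    (hcav : c * a < v) (hC : 0 < C) :
    ∀ᶠ n : ℕ in atTop, a ^ n ≤ C * v ^ n / n / c ^ (n + 1) := by
  filter_upwards [eventually_natCast_mul_pow_le (mul_pos hc ha) hcav (div_pos hC hc),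
    eventually_gt_atTop 0] with n hgrowth hn
  rw [le_div_iff₀ (by positivity), le_div_iff₀ (by positivity)]
  calc a ^ n * c ^ (n + 1) * n = c * (n * (c * a) ^ n) := by ring
    _ ≤ c * (C / c * v ^ n) := by gcongr
    _ = C * v ^ n := by field_simp

theorem exp_neg_sub_mul_one_add_lt {s h : ℝ} (hh : 0 < h) :
    (Real.exp (-s) - h) * (1 + h * Real.exp s / 2) < Real.exp (-s) := by
  have hexp : Real.exp (-s) * Real.exp s = 1 := by
    rw [← Real.exp_add, neg_add_cancel, Real.exp_zero]
  have : 0 < h ^ 2 * Real.exp s := by positivity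
  linear_combination (h / 2) * hexp + this / 2 + hh / 2

theorem norm_J2 {ρ : ℝ} (hρ : 1 < ρ) (n : ℕ) (z : ℂ) :
    ‖J2 ρ n z‖ = Real.Gamma (1 + (n : ℝ) / ρ) / Rn ρ n ^ (n + 1) / ‖z‖ ^ (n + 1) := by
  have hρ₀ : 0 < ρ := by linarith
  rw [J2, norm_div, norm_mul, norm_pow, norm_pow, Complex.norm_real, Complex.norm_real,
    Real.norm_of_nonneg (Gamma_pos_of_pos (by positivity)).le,
    Real.norm_of_nonneg (Rn_pos hρ n).le, div_div]

theorem stmt15_general (ρ : ℝ) (hρ : 1 < ρ) (δ₃ h : ℝ) (hh : 0 < h)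
    (hh' : h < Real.exp (-(1 / ρ))) :
    ∃ N : ℕ, ∀ n ≥ N, ∀ z : ℂ,
      0 < ‖z‖ → ‖z‖ ≤ Real.exp (-(1 / ρ)) - h →
      π / (2 * ρ) + δ₃ ≤ |z.arg| →
      (1 + h * Real.exp (1 / ρ) / 2) ^ n ≤ ‖J2 ρ n z‖ := by
  set c := Real.exp (-(1 / ρ)) - h
  have hc : 0 < c := sub_pos.2 hh'
  obtain ⟨N, hN⟩ := eventually_atTop.1 ((eventually_pow_le_mul_pow_div_natCast_div_pow
    (by positivity) hc (exp_neg_sub_mul_one_add_lt hh)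
    (Real.exp_pos ((1 - ρ) / ρ))).and (eventually_gt_atTop 0))
  refine ⟨N, fun n hn z hz₀ hzc _ => ?_⟩
  obtain ⟨hgrowth, hn₀⟩ := hN n hn
  have hRn := Rn_pos hρ n
  calc (1 + h * Real.exp (1 / ρ) / 2) ^ n
      ≤ Real.exp ((1 - ρ) / ρ) * Real.exp (-(1 / ρ)) ^ n / n / c ^ (n + 1) := hgrowth
    _ ≤ Real.Gamma (1 + (n : ℝ) / ρ) / Rn ρ n ^ (n + 1) / c ^ (n + 1) :=
        div_le_div_of_nonneg_right (exp_mul_exp_neg_pow_div_le_Gamma_div_Rn_pow hρ hn₀)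
          (pow_nonneg hc.le _)
    _ ≤ Real.Gamma (1 + (n : ℝ) / ρ) / Rn ρ n ^ (n + 1) / ‖z‖ ^ (n + 1) := by gcongr
    _ = ‖J2 ρ n z‖ := (norm_J2 hρ n z).symm

theorem stmt15 (ρ : ℝ) (hρ : 1 < ρ) (δ₃ h : ℝ) (hδ₃ : 0 < δ₃) (hh : 0 < h)
    (hh' : h < Real.exp (-(1 / ρ))) :
    ∃ N : ℕ, ∀ n ≥ N, ∀ z : ℂ,
      0 < ‖z‖ → ‖z‖ ≤ Real.exp (-(1 / ρ)) - h →
      π / (2 * ρ) + δ₃ ≤ |z.arg| →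
      (1 + h * Real.exp (1 / ρ) / 2) ^ n ≤ ‖J2 ρ n z‖ :=
  stmt15_general ρ hρ δ₃ h hh hh'
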